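/- arXiv:1611.01042 — 3 statements merged into one kernel-verified Lean document; each statement's English description precedes it below -/
import Mathlib

section
/- In the Closed-form SINR setting with fixed powers P_u, P_r > 0 (not depending on M), for every index k the function M ↦ SINR_k(M) tends to +∞ as M → ∞; consequently the spectral efficiency SE_k(M) = ((T−τ)/T)·((K−1)/K)·log₂(1 + SINR_k(M)) grows without bound as M → ∞. -/
open Filter Finset

noncomputable section

/-- The closed-form normalization factor `α⁽¹⁾` of eq. (24) of the paper, as a function of
the number of relay antennas `M`, for estimated-channel variances `σ2` (i.e. `σ_k²`),
large-scale coefficients `β`, user power `Pu` and relay power `Pr`. -/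
def alphaCF (K : ℕ) [NeZero K] (σ2 β : ZMod K → ℝ) (Pu Pr : ℝ) (M : ℕ) : ℝ :=
  Pr / ((M : ℝ) ^ 3 * Pu * (∑ k' : ZMod K, σ2 (k' - 1) * (σ2 k') ^ 2)
    + (M : ℝ) ^ 2 * (∑ k' : ZMod K, σ2 k' * σ2 (k' + 1)) * (Pu * (∑ k' : ZMod K, β k') + 1)
    + (M : ℝ) * Pu * ∑ k' : ZMod K, (σ2 k') ^ 2 * σ2 (k' + 1))

/-- `a_{k,i} = σ_k⁴ σ_{k+1}² β_i + σ_i⁴ σ_{i-1}² β_k`. -/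
def aCF (K : ℕ) [NeZero K] (σ2 β : ZMod K → ℝ) (k i : ZMod K) : ℝ :=
  (σ2 k) ^ 2 * σ2 (k + 1) * β i + (σ2 i) ^ 2 * σ2 (i - 1) * β k

/-- `b_{k,i} = β_k β_i Σ_{k'} σ_{k'}² σ_{k'+1}²`. -/
def bCF (K : ℕ) [NeZero K] (σ2 β : ZMod K → ℝ) (k i : ZMod K) : ℝ :=
  β k * β i * ∑ k' : ZMod K, σ2 k' * σ2 (k' + 1)

/-- `c_{k,i} = σ_k⁴ σ_{k-1}² β_i + σ_i⁴ σ_{i+1}² β_k`. -/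
def cCF (K : ℕ) [NeZero K] (σ2 β : ZMod K → ℝ) (k i : ZMod K) : ℝ :=
  (σ2 k) ^ 2 * σ2 (k - 1) * β i + (σ2 i) ^ 2 * σ2 (i + 1) * β k

/-- `V_k(M) = M³ a_{k,k+1} + M² b_{k,k+1} + M c_{k,k+1}` (the beamforming uncertainty
variance of eq. (27)). -/
def Vcf (K : ℕ) [NeZero K] (σ2 β : ZMod K → ℝ) (k : ZMod K) (M : ℕ) : ℝ :=
  (M : ℝ) ^ 3 * aCF K σ2 β k (k + 1) + (M : ℝ) ^ 2 * bCF K σ2 β k (k + 1)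
    + (M : ℝ) * cCF K σ2 β k (k + 1)

/-- The inter-user interference term `IU_k(M)` of eq. (28). -/
def IUcf (K : ℕ) [NeZero K] (σ2 β : ZMod K → ℝ) (Pu Pr : ℝ) (k : ZMod K) (M : ℕ) : ℝ :=
  alphaCF K σ2 β Pu Pr M * Pu * (∑ i ∈ Finset.univ.erase (k + 1),
      ((M : ℝ) ^ 3 * aCF K σ2 β k i + (M : ℝ) ^ 2 * bCF K σ2 β k i + (M : ℝ) * cCF K σ2 β k i))
  + alphaCF K σ2 β Pu Pr M * Pu * (M : ℝ) ^ 2 * (σ2 (k - 1)) ^ 2 * (σ2 k) ^ 2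
  + alphaCF K σ2 β Pu Pr M * Pu * (M : ℝ) *
      (2 * (σ2 k) ^ 3 * σ2 (k + 1) + 2 * (σ2 k) ^ 3 * σ2 (k - 1)
        + (2 * (σ2 k) ^ 2 + (β k) ^ 2 - 2 * β k * σ2 k)
          * ∑ k' : ZMod K, 2 * σ2 k' * σ2 (k' + 1))

/-- The amplified-noise term `AN_k(M)` of eq. (29). -/
def ANcf (K : ℕ) [NeZero K] (σ2 β : ZMod K → ℝ) (Pu Pr : ℝ) (k : ZMod K) (M : ℕ) : ℝ :=
  alphaCF K σ2 β Pu Pr M * ((M : ℝ) ^ 3 * (σ2 k) ^ 2 * σ2 (k + 1)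
    + (M : ℝ) ^ 2 * β k * ∑ k' : ZMod K, σ2 k' * σ2 (k' + 1))

/-- The closed-form SINR of user `k` in the first time slot (Theorem 1 of the paper). -/
def sinrCF (K : ℕ) [NeZero K] (σ2 β : ZMod K → ℝ) (Pu Pr : ℝ) (k : ZMod K) (M : ℕ) : ℝ :=
  alphaCF K σ2 β Pu Pr M * Pu * (M : ℝ) ^ 4 * (σ2 k) ^ 2 * (σ2 (k + 1)) ^ 2
    / (alphaCF K σ2 β Pu Pr M * Pu * Vcf K σ2 β k M
        + IUcf K σ2 β Pu Pr k M + ANcf K σ2 β Pu Pr k M + 1)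

/-!
The normalization `α(M)` is `Pr` divided by a cubic in `M` with positive leading coefficient,
and every term of the SINR denominator except the `1` is `α(M)` times a polynomial of degree at
most three in `M` with nonnegative coefficients, while the numerator is `α(M)` times a positive
multiple of `M⁴`. Clearing `α(M)` turns the SINR into a quartic over a cubic with positive
leading coefficients, which tends to `+∞`; the spectral efficiency is a positive multiple of
`log₂ (1 + SINR)`.
-/
open Polynomial in
theorem tendsto_quartic_div_cubic_atTop {c a₃ a₂ a₁ : ℝ} (hc : 0 < c) (ha₃ : 0 < a₃) :
    Tendsto (fun x : ℝ => c * x ^ 4 / (a₃ * x ^ 3 + a₂ * x ^ 2 + a₁ * x)) atTop atTop := by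
  have h := div_tendsto_atTop_of_degree_gt' (C c * X ^ 4)
    (C a₃ * X ^ 3 + C a₂ * X ^ 2 + C a₁ * X + C 0)
    (by rw [degree_cubic ha₃.ne', degree_C_mul_X_pow 4 hc.ne']; decide)
    (by rw [leadingCoeff_cubic ha₃.ne', leadingCoeff_C_mul_X_pow]; positivity)
  simpa using h

section ClosedForm

variable {K : ℕ} [NeZero K] {σ2 β : ZMod K → ℝ} {Pu Pr : ℝ}

theorem aCF_nonneg (hσ : ∀ i, 0 ≤ σ2 i) (hβ : ∀ i, 0 ≤ β i) (k i : ZMod K) :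
    0 ≤ aCF K σ2 β k i := by
  have := hσ k; have := hσ (k + 1); have := hσ i; have := hσ (i - 1)
  have := hβ k; have := hβ i
  unfold aCF; positivity

theorem IUcf_eq_alphaCF_mul (k : ZMod K) (M : ℕ) :
    IUcf K σ2 β Pu Pr k M = alphaCF K σ2 β Pu Pr M * Pu *
      ((M : ℝ) ^ 3 * ∑ i ∈ univ.erase (k + 1), aCF K σ2 β k i
        + (M : ℝ) ^ 2
          * (∑ i ∈ univ.erase (k + 1), bCF K σ2 β k i + σ2 (k - 1) ^ 2 * σ2 k ^ 2)
        + (M : ℝ) * (∑ i ∈ univ.erase (k + 1), cCF K σ2 β k i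
          + (2 * σ2 k ^ 3 * σ2 (k + 1) + 2 * σ2 k ^ 3 * σ2 (k - 1)
            + (2 * σ2 k ^ 2 + β k ^ 2 - 2 * β k * σ2 k)
              * ∑ k' : ZMod K, 2 * σ2 k' * σ2 (k' + 1)))) := by
  simp only [IUcf, sum_add_distrib, ← mul_sum]
  ring

theorem exists_sinrCF_eq_quartic_div_cubic (hσ : ∀ i, 0 < σ2 i) (hβ : ∀ i, 0 ≤ β i)
    (hPu : 0 < Pu) (hPr : 0 < Pr) (k : ZMod K) :
    ∃ a₃ a₂ a₁ : ℝ, 0 < a₃ ∧ ∀ M : ℕ, M ≠ 0 → sinrCF K σ2 β Pu Pr k M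
      = Pr * Pu * σ2 k ^ 2 * σ2 (k + 1) ^ 2 * (M : ℝ) ^ 4
        / (a₃ * (M : ℝ) ^ 3 + a₂ * (M : ℝ) ^ 2 + a₁ * (M : ℝ)) := by
  have hσ0 : ∀ i, 0 ≤ σ2 i := fun i => (hσ i).le
  set ι := univ.erase (k + 1)
  have hS1 : 0 < ∑ k' : ZMod K, σ2 (k' - 1) * σ2 k' ^ 2 :=
    sum_pos (fun j _ => by have := hσ (j - 1); have := hσ j; positivity) univ_nonempty
  have hS2 : 0 ≤ ∑ k' : ZMod K, σ2 k' * σ2 (k' + 1) :=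
    sum_nonneg fun j _ => mul_nonneg (hσ0 j) (hσ0 (j + 1))
  have hS3 : 0 ≤ ∑ k' : ZMod K, σ2 k' ^ 2 * σ2 (k' + 1) :=
    sum_nonneg fun j _ => mul_nonneg (sq_nonneg _) (hσ0 (j + 1))
  have hSB : 0 ≤ ∑ k' : ZMod K, β k' := sum_nonneg fun j _ => hβ j
  have hA : 0 ≤ aCF K σ2 β k (k + 1) + ∑ i ∈ ι, aCF K σ2 β k i :=
    add_nonneg (aCF_nonneg hσ0 hβ _ _) (sum_nonneg fun i _ => aCF_nonneg hσ0 hβ _ _)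
  refine ⟨Pr * Pu * (aCF K σ2 β k (k + 1) + ∑ i ∈ ι, aCF K σ2 β k i)
      + Pr * (σ2 k ^ 2 * σ2 (k + 1)) + Pu * ∑ k' : ZMod K, σ2 (k' - 1) * σ2 k' ^ 2,
    Pr * Pu * (bCF K σ2 β k (k + 1) + ∑ i ∈ ι, bCF K σ2 β k i
        + σ2 (k - 1) ^ 2 * σ2 k ^ 2)
      + Pr * (β k * ∑ k' : ZMod K, σ2 k' * σ2 (k' + 1))
      + (∑ k' : ZMod K, σ2 k' * σ2 (k' + 1)) * (Pu * ∑ k' : ZMod K, β k' + 1),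
    Pr * Pu * (cCF K σ2 β k (k + 1) + ∑ i ∈ ι, cCF K σ2 β k i
        + (2 * σ2 k ^ 3 * σ2 (k + 1) + 2 * σ2 k ^ 3 * σ2 (k - 1)
          + (2 * σ2 k ^ 2 + β k ^ 2 - 2 * β k * σ2 k)
            * ∑ k' : ZMod K, 2 * σ2 k' * σ2 (k' + 1)))
      + Pu * ∑ k' : ZMod K, σ2 k' ^ 2 * σ2 (k' + 1), ?_, fun M hM => ?_⟩
  · have := hσ k; have := hσ (k + 1)
    positivity
  have hM : (0 : ℝ) < M := by positivity
  have hD : 0 < (M : ℝ) ^ 3 * Pu * (∑ k' : ZMod K, σ2 (k' - 1) * σ2 k' ^ 2)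
      + (M : ℝ) ^ 2 * (∑ k' : ZMod K, σ2 k' * σ2 (k' + 1)) * (Pu * ∑ k' : ZMod K, β k' + 1)
      + (M : ℝ) * Pu * ∑ k' : ZMod K, σ2 k' ^ 2 * σ2 (k' + 1) := by positivity
  rw [sinrCF, IUcf_eq_alphaCF_mul, ANcf, Vcf, alphaCF]
  field_simp
  ring

end ClosedForm

/-- with fixed powers, the closed-form SINR of each user tends to `+∞`
as `M → ∞`, and so does the spectral efficiency. -/
theorem sinr_and_se_unbounded
    (K : ℕ) [NeZero K] (hK : 2 ≤ K)
    (β : ZMod K → ℝ) (hβ : ∀ k, 0 < β k)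
    (τ T Pp : ℝ) (hτ : (K : ℝ) ≤ τ) (hT : τ < T) (hPp : 0 < Pp)
    (σ2 : ZMod K → ℝ) (hσ2 : ∀ k, σ2 k = τ * Pp * (β k) ^ 2 / (τ * Pp * β k + 1))
    (Pu Pr : ℝ) (hPu : 0 < Pu) (hPr : 0 < Pr) (k : ZMod K) :
    Tendsto (fun M : ℕ => sinrCF K σ2 β Pu Pr k M) atTop atTop ∧
    Tendsto (fun M : ℕ => (T - τ) / T * (((K : ℝ) - 1) / K)
        * Real.logb 2 (1 + sinrCF K σ2 β Pu Pr k M)) atTop atTop := by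
  have hK₀ : (2 : ℝ) ≤ K := by exact_mod_cast hK
  have hτ₀ : 0 < τ := by linarith
  have hσ : ∀ j, 0 < σ2 j := fun j => by
    have := hβ j
    rw [hσ2 j]; positivity
  obtain ⟨a₃, a₂, a₁, ha₃, hsinr⟩ :=
    exists_sinrCF_eq_quartic_div_cubic hσ (fun i => (hβ i).le) hPu hPr k
  have hc : 0 < Pr * Pu * σ2 k ^ 2 * σ2 (k + 1) ^ 2 := by
    have := hσ k; have := hσ (k + 1); positivity
  have hlim : Tendsto (fun M : ℕ => sinrCF K σ2 β Pu Pr k M) atTop atTop :=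
    ((tendsto_quartic_div_cubic_atTop hc ha₃).comp tendsto_natCast_atTop_atTop).congr'
      ((eventually_ne_atTop 0).mono fun M hM => (hsinr M hM).symm)
  have hpre : 0 < (T - τ) / T * (((K : ℝ) - 1) / K) :=
    mul_pos (div_pos (by linarith) (by linarith)) (div_pos (by linarith) (by linarith))
  exact ⟨hlim, ((Real.tendsto_logb_atTop one_lt_two).comp
    (tendsto_atTop_add_const_left _ 1 hlim)).const_mul_atTop hpre⟩
end
end

section
/- In the Closed-form SINR setting, fix E_u > 0 and P_r > 0, and for each M ≥ 1 set the per-user power to P_u = E_u/M (with P_r fixed). Then for every index k, SINR_k(M) → E_u·σ_{k+1}² as M → ∞, and hence the spectral efficiency SE_k(M) = ((T−τ)/T)·((K−1)/K)·log₂(1 + SINR_k(M)) converges to ((T−τ)/T)·((K−1)/K)·log₂(1 + E_u·σ_{k+1}²). (Equation (33) of the paper.) -/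
open Filter Finset

noncomputable section

private lemma sinrCF_key (K : ℕ) [NeZero K] (σ2 β : ZMod K → ℝ) (Eu Pr : ℝ) (k : ZMod K) (M : ℕ)
    (hM : (0:ℝ) < M) (hEu : 0 < Eu) (hPr : 0 < Pr)
    (hσ : ∀ j, 0 < σ2 j) (hβ : ∀ j, 0 < β j)
    (S1 S2 S3 Sβ Wa Wb Wc A3 A2 A1 q : ℝ)
    (hS1 : S1 = ∑ k' : ZMod K, (σ2 k') ^ 2 * σ2 (k' + 1))
    (hS2 : S2 = ∑ k' : ZMod K, σ2 k' * σ2 (k' + 1))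
    (hS3 : S3 = ∑ k' : ZMod K, σ2 (k' - 1) * (σ2 k') ^ 2)
    (hSβ : Sβ = ∑ k' : ZMod K, β k')
    (hWa : Wa = ∑ i ∈ Finset.univ.erase (k + 1), aCF K σ2 β k i)
    (hWb : Wb = ∑ i ∈ Finset.univ.erase (k + 1), bCF K σ2 β k i)
    (hWc : Wc = ∑ i ∈ Finset.univ.erase (k + 1), cCF K σ2 β k i)
    (hA3 : A3 = aCF K σ2 β k (k+1)) (hA2 : A2 = bCF K σ2 β k (k+1))
    (hA1 : A1 = cCF K σ2 β k (k+1))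
    (hq : q = 2 * (σ2 k) ^ 2 + (β k) ^ 2 - 2 * β k * σ2 k)
    (hqpos : 0 ≤ q)
    (hS1p : 0 < S1) (hS2p : 0 < S2) (hS3p : 0 < S3) (hSβp : 0 < Sβ)
    (hWap : 0 ≤ Wa) (hWbp : 0 ≤ Wb) (hWcp : 0 ≤ Wc)
    (hA3p : 0 ≤ A3) (hA2p : 0 ≤ A2) (hA1p : 0 ≤ A1) :
    sinrCF K σ2 β (Eu / M) Pr k M
      = Pr * Eu * (σ2 k)^2 * (σ2 (k+1))^2 /
        (Pr * (σ2 k)^2 * σ2 (k+1)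
          + (Pr*Eu*(A3+Wa) + Pr*(β k)*S2 + (Eu*S3+S2)) / M
          + (Pr*Eu*(A2+Wb+(σ2 (k-1))^2*(σ2 k)^2) + Eu*Sβ*S2) / (M:ℝ)^2
          + (Pr*Eu*(A1+Wc+(2*(σ2 k)^3*σ2 (k+1)+2*(σ2 k)^3*σ2 (k-1)+q*(2*S2))) + Eu*S1) / (M:ℝ)^3) := by
  have hα : alphaCF K σ2 β (Eu / M) Pr M
      = Pr / ((M:ℝ)^2 * (Eu * S3 + S2) + (M:ℝ) * Eu * Sβ * S2 + Eu * S1) := by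
    unfold alphaCF
    rw [← hS1, ← hS2, ← hS3, ← hSβ]
    congr 1
    field_simp
    ring
  have hW : (∑ i ∈ Finset.univ.erase (k + 1),
      ((M : ℝ) ^ 3 * aCF K σ2 β k i + (M : ℝ) ^ 2 * bCF K σ2 β k i + (M : ℝ) * cCF K σ2 β k i))
      = (M:ℝ)^3 * Wa + (M:ℝ)^2 * Wb + (M:ℝ) * Wc := by
    rw [hWa, hWb, hWc, Finset.mul_sum, Finset.mul_sum, Finset.mul_sum,
      ← Finset.sum_add_distrib, ← Finset.sum_add_distrib]
  have h2S2 : (∑ k' : ZMod K, 2 * σ2 k' * σ2 (k' + 1)) = 2 * S2 := by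
    rw [hS2, Finset.mul_sum]; exact Finset.sum_congr rfl fun _ _ => by ring
  unfold sinrCF IUcf ANcf Vcf
  rw [hα, hW, h2S2, ← hS2, ← hA3, ← hA2, ← hA1, ← hq]
  have hA : (0:ℝ) < (M:ℝ)^2 * (Eu * S3 + S2) + (M:ℝ) * Eu * Sβ * S2 + Eu * S1 := by positivity
  rw [div_eq_div_iff]
  · field_simp
    ring
  · have h1 := hσ k; have h2 := hσ (k+1); have h3 := hσ (k-1); have h4 := hβ k
    positivity
  · have h1 := hσ k; have h2 := hσ (k+1); have h3 := hσ (k-1); have h4 := hβ k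
    positivity

/-- with per-user power scaled as `P_u = E_u/M` and fixed relay power,
`SINR_k(M) → E_u σ_{k+1}²` and the spectral efficiency converges accordingly (eq. (33)). -/
theorem sinr_limit_user_power_scaling
    (K : ℕ) [NeZero K] (hK : 2 ≤ K)
    (β : ZMod K → ℝ) (hβ : ∀ k, 0 < β k)
    (τ T Pp : ℝ) (hτ : (K : ℝ) ≤ τ) (hT : τ < T) (hPp : 0 < Pp)
    (σ2 : ZMod K → ℝ) (hσ2 : ∀ k, σ2 k = τ * Pp * (β k) ^ 2 / (τ * Pp * β k + 1))
    (Eu Pr : ℝ) (hEu : 0 < Eu) (hPr : 0 < Pr) (k : ZMod K) :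
    Tendsto (fun M : ℕ => sinrCF K σ2 β (Eu / M) Pr k M) atTop
      (nhds (Eu * σ2 (k + 1))) ∧
    Tendsto (fun M : ℕ => (T - τ) / T * (((K : ℝ) - 1) / K)
        * Real.logb 2 (1 + sinrCF K σ2 β (Eu / M) Pr k M)) atTop
      (nhds ((T - τ) / T * (((K : ℝ) - 1) / K) * Real.logb 2 (1 + Eu * σ2 (k + 1)))) := by
  have hτ0 : (0:ℝ) < τ := lt_of_lt_of_le (by positivity) hτ
  have hσp : ∀ j, 0 < σ2 j := by
    intro j
    rw [hσ2 j]
    have hb := hβ j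
    positivity
  have hne : (Finset.univ : Finset (ZMod K)).Nonempty := Finset.univ_nonempty
  have hS1p : 0 < ∑ k' : ZMod K, (σ2 k') ^ 2 * σ2 (k' + 1) :=
    Finset.sum_pos (fun i _ => by have := hσp i; have := hσp (i+1); positivity) hne
  have hS2p : 0 < ∑ k' : ZMod K, σ2 k' * σ2 (k' + 1) :=
    Finset.sum_pos (fun i _ => mul_pos (hσp i) (hσp (i+1))) hne
  have hS3p : 0 < ∑ k' : ZMod K, σ2 (k' - 1) * (σ2 k') ^ 2 :=
    Finset.sum_pos (fun i _ => by have := hσp i; have := hσp (i-1); positivity) hne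
  have hSβp : 0 < ∑ k' : ZMod K, β k' := Finset.sum_pos (fun i _ => hβ i) hne
  have hWap : 0 ≤ ∑ i ∈ Finset.univ.erase (k + 1), aCF K σ2 β k i :=
    Finset.sum_nonneg fun i _ => by
      have h1 := hσp k; have h2 := hσp (k+1); have h3 := hσp i; have h4 := hσp (i-1)
      have h5 := hβ i; have h6 := hβ k
      unfold aCF; positivity
  have hWbp : 0 ≤ ∑ i ∈ Finset.univ.erase (k + 1), bCF K σ2 β k i :=
    Finset.sum_nonneg fun i _ => by
      have h5 := hβ i; have h6 := hβ k
      unfold bCF; positivity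
  have hWcp : 0 ≤ ∑ i ∈ Finset.univ.erase (k + 1), cCF K σ2 β k i :=
    Finset.sum_nonneg fun i _ => by
      have h1 := hσp k; have h2 := hσp (k-1); have h3 := hσp i; have h4 := hσp (i+1)
      have h5 := hβ i; have h6 := hβ k
      unfold cCF; positivity
  have hA3p : 0 ≤ aCF K σ2 β k (k+1) := by
    have h1 := hσp k; have h2 := hσp (k+1); have h3 := hσp (k+1-1)
    have h5 := hβ (k+1); have h6 := hβ k
    unfold aCF; positivity
  have hA2p : 0 ≤ bCF K σ2 β k (k+1) := by
    have h5 := hβ (k+1); have h6 := hβ k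
    unfold bCF; positivity
  have hA1p : 0 ≤ cCF K σ2 β k (k+1) := by
    have h1 := hσp k; have h2 := hσp (k-1); have h3 := hσp (k+1); have h4 := hσp (k+1+1)
    have h5 := hβ (k+1); have h6 := hβ k
    unfold cCF; positivity
  have hqpos : 0 ≤ 2 * (σ2 k) ^ 2 + (β k) ^ 2 - 2 * β k * σ2 k := by
    nlinarith [sq_nonneg (σ2 k - β k), sq_nonneg (σ2 k)]
  set e1 : ℝ := Pr*Eu*(aCF K σ2 β k (k+1) + ∑ i ∈ Finset.univ.erase (k + 1), aCF K σ2 β k i)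
      + Pr*(β k)*(∑ k' : ZMod K, σ2 k' * σ2 (k' + 1))
      + (Eu*(∑ k' : ZMod K, σ2 (k' - 1) * (σ2 k') ^ 2) + ∑ k' : ZMod K, σ2 k' * σ2 (k' + 1))
    with he1
  set e2 : ℝ := Pr*Eu*(bCF K σ2 β k (k+1) + (∑ i ∈ Finset.univ.erase (k + 1), bCF K σ2 β k i)
        + (σ2 (k-1))^2*(σ2 k)^2)
      + Eu*(∑ k' : ZMod K, β k')*(∑ k' : ZMod K, σ2 k' * σ2 (k' + 1)) with he2
  set e3 : ℝ := Pr*Eu*(cCF K σ2 β k (k+1) + (∑ i ∈ Finset.univ.erase (k + 1), cCF K σ2 β k i)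
        + (2*(σ2 k)^3*σ2 (k+1)+2*(σ2 k)^3*σ2 (k-1)
            + (2 * (σ2 k) ^ 2 + (β k) ^ 2 - 2 * β k * σ2 k)*(2*(∑ k' : ZMod K, σ2 k' * σ2 (k' + 1)))))
      + Eu*(∑ k' : ZMod K, (σ2 k') ^ 2 * σ2 (k' + 1)) with he3
  have hkey : (fun M : ℕ => sinrCF K σ2 β (Eu / M) Pr k M)
      =ᶠ[atTop] fun M : ℕ => Pr * Eu * (σ2 k)^2 * (σ2 (k+1))^2 /
        (Pr * (σ2 k)^2 * σ2 (k+1) + e1 / M + e2 / (M:ℝ)^2 + e3 / (M:ℝ)^3) := by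
    filter_upwards [eventually_ge_atTop 1] with M hM1
    have hM : (0:ℝ) < M := by exact_mod_cast Nat.lt_of_lt_of_le Nat.zero_lt_one hM1
    rw [he1, he2, he3]
    exact sinrCF_key K σ2 β Eu Pr k M hM hEu hPr hσp hβ _ _ _ _ _ _ _ _ _ _ _
      rfl rfl rfl rfl rfl rfl rfl rfl rfl rfl rfl hqpos hS1p hS2p hS3p hSβp
      hWap hWbp hWcp hA3p hA2p hA1p
  have hcastTop : Tendsto (fun M : ℕ => (M:ℝ)) atTop atTop := tendsto_natCast_atTop_atTop
  have hz : ∀ (e : ℝ) (j : ℕ), j ≠ 0 →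
      Tendsto (fun M : ℕ => e / (M:ℝ)^j) atTop (nhds 0) := fun e j hj =>
    tendsto_const_nhds.div_atTop ((tendsto_pow_atTop hj).comp hcastTop)
  have hz1 : Tendsto (fun M : ℕ => e1 / (M:ℝ)) atTop (nhds 0) := by
    have := hz e1 1 one_ne_zero; simpa using this
  have hden : Tendsto (fun M : ℕ =>
      Pr * (σ2 k)^2 * σ2 (k+1) + e1 / M + e2 / (M:ℝ)^2 + e3 / (M:ℝ)^3) atTop
      (nhds (Pr * (σ2 k)^2 * σ2 (k+1))) := by
    have h : Tendsto (fun M : ℕ =>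
        Pr * (σ2 k)^2 * σ2 (k+1) + e1 / M + e2 / (M:ℝ)^2 + e3 / (M:ℝ)^3) atTop
        (nhds (Pr * (σ2 k)^2 * σ2 (k+1) + 0 + 0 + 0)) :=
      ((tendsto_const_nhds.add hz1).add (hz e2 2 two_ne_zero)).add (hz e3 3 three_ne_zero)
    simpa using h
  have hdp : (0:ℝ) < Pr * (σ2 k)^2 * σ2 (k+1) := by
    have h1 := hσp k; have h2 := hσp (k+1); positivity
  have hlim0 : Tendsto (fun M : ℕ => Pr * Eu * (σ2 k)^2 * (σ2 (k+1))^2 /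
      (Pr * (σ2 k)^2 * σ2 (k+1) + e1 / M + e2 / (M:ℝ)^2 + e3 / (M:ℝ)^3)) atTop
      (nhds (Pr * Eu * (σ2 k)^2 * (σ2 (k+1))^2 / (Pr * (σ2 k)^2 * σ2 (k+1)))) :=
    tendsto_const_nhds.div hden hdp.ne'
  have hval : Pr * Eu * (σ2 k)^2 * (σ2 (k+1))^2 / (Pr * (σ2 k)^2 * σ2 (k+1))
      = Eu * σ2 (k+1) := by
    rw [div_eq_iff hdp.ne']; ring
  have hpart1 : Tendsto (fun M : ℕ => sinrCF K σ2 β (Eu / M) Pr k M) atTop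
      (nhds (Eu * σ2 (k + 1))) := by
    rw [← hval]
    exact (hlim0.congr' hkey.symm :)
  refine ⟨hpart1, ?_⟩
  have h1p : (1 : ℝ) + Eu * σ2 (k+1) ≠ 0 := by
    have := hσp (k+1); positivity
  have hlog : Tendsto (fun M : ℕ => Real.logb 2 (1 + sinrCF K σ2 β (Eu / M) Pr k M)) atTop
      (nhds (Real.logb 2 (1 + Eu * σ2 (k + 1)))) :=
    (Real.continuousAt_logb h1p).tendsto.comp (tendsto_const_nhds.add hpart1)
  exact hlog.const_mul _
end
end

section
/- In the Closed-form SINR setting, fix E_u > 0 and E_r > 0, and for each M ≥ 1 set P_u = E_u/M and P_r = E_r/M. Define ξ = E_r / Σ_{k'=1}^K (E_u·σ_{k'-1}²σ_{k'}⁴ + σ_{k'}²σ_{k'+1}²). Then for every index k, SINR_k(M) → ξ·E_u·σ_k⁴σ_{k+1}⁴ / (ξ·σ_k⁴σ_{k+1}² + 1) as M → ∞, and hence SE_k(M) = ((T−τ)/T)·((K−1)/K)·log₂(1 + SINR_k(M)) converges to ((T−τ)/T)·((K−1)/K)·log₂(1 + ξ·E_u·σ_k⁴σ_{k+1}⁴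 / (ξ·σ_k⁴σ_{k+1}² + 1)). (Equation (35) of the paper.) -/
open Filter Finset

noncomputable section

/-!
With `P_u = E_u/M` and `P_r = E_r/M` the normalization is `α = (E_r/M) / Q(M)` with
`Q(M) = M² C + O(M)`, `C = Σ_{k'} (E_u σ_{k'-1}² σ_{k'}⁴ + σ_{k'}² σ_{k'+1}²) = E_r/ξ`, so
`1/(α P_u M⁴) = Q(M)/(E_r E_u M²) → 1/(ξ E_u)`. After dividing numerator and denominator of
`SINR_k` by `α P_u M⁴`, the beamforming-uncertainty and inter-user terms are polynomials in `1/M`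
vanishing at `0`, and the amplified-noise term tends to `σ_k⁴ σ_{k+1}²/E_u`. The spectral
efficiency follows by continuity of `log₂` at `1 + SINR_k(∞) > 0`.
-/

open Topology

theorem tendsto_of_eq_comp_natCast_inv {f : ℝ → ℝ} {L : ℝ} (hf : ContinuousAt f 0) (hL : f 0 = L)
    {u : ℕ → ℝ} (hu : ∀ M : ℕ, M ≠ 0 → u M = f (M : ℝ)⁻¹) : Tendsto u atTop (𝓝 L) := by
  refine hL ▸ (hf.tendsto.comp tendsto_inv_atTop_nhds_zero_nat).congr' ?_
  filter_upwards [eventually_ne_atTop 0] with M hM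
  exact (hu M hM).symm

section ClosedForm

variable {K : ℕ} [NeZero K] (σ2 β : ZMod K → ℝ) (k : ZMod K)

/-- `IU_k(M) / (α P_u)`, which does not depend on the powers. -/
def IUnormCF (M : ℕ) : ℝ :=
  (∑ i ∈ Finset.univ.erase (k + 1),
      ((M : ℝ) ^ 3 * aCF K σ2 β k i + (M : ℝ) ^ 2 * bCF K σ2 β k i + (M : ℝ) * cCF K σ2 β k i))
  + (M : ℝ) ^ 2 * (σ2 (k - 1)) ^ 2 * (σ2 k) ^ 2
  + (M : ℝ) * (2 * (σ2 k) ^ 3 * σ2 (k + 1) + 2 * (σ2 k) ^ 3 * σ2 (k - 1)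
      + (2 * (σ2 k) ^ 2 + (β k) ^ 2 - 2 * β k * σ2 k) * ∑ k' : ZMod K, 2 * σ2 k' * σ2 (k' + 1))

theorem IUcf_eq_mul (Pu Pr : ℝ) (M : ℕ) :
    IUcf K σ2 β Pu Pr k M = alphaCF K σ2 β Pu Pr M * Pu * IUnormCF σ2 β k M := by
  rw [IUcf, IUnormCF]
  ring

theorem sinrCF_eq_div {Pu Pr : ℝ} {M : ℕ} (hα : alphaCF K σ2 β Pu Pr M ≠ 0) (hPu : Pu ≠ 0)
    (hM : (M : ℝ) ≠ 0) :
    sinrCF K σ2 β Pu Pr k M = (σ2 k) ^ 2 * (σ2 (k + 1)) ^ 2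
      / (Vcf K σ2 β k M / (M : ℝ) ^ 4 + IUnormCF σ2 β k M / (M : ℝ) ^ 4
        + ((M : ℝ) ^ 3 * (σ2 k) ^ 2 * σ2 (k + 1)
            + (M : ℝ) ^ 2 * β k * ∑ k' : ZMod K, σ2 k' * σ2 (k' + 1)) / (Pu * (M : ℝ) ^ 4)
        + 1 / (alphaCF K σ2 β Pu Pr M * Pu * (M : ℝ) ^ 4)) := by
  rw [sinrCF, IUcf_eq_mul, ANcf]
  field_simp

theorem tendsto_Vcf_div_pow_four :
    Tendsto (fun M : ℕ => Vcf K σ2 β k M / (M : ℝ) ^ 4) atTop (𝓝 0) := by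
  refine tendsto_of_eq_comp_natCast_inv
    (f := fun x => aCF K σ2 β k (k + 1) * x + bCF K σ2 β k (k + 1) * x ^ 2
      + cCF K σ2 β k (k + 1) * x ^ 3) (by fun_prop) (by simp)
    fun M hM => by
      have : (M : ℝ) ≠ 0 := Nat.cast_ne_zero.2 hM
      rw [Vcf]
      field_simp

theorem tendsto_IUnormCF_div_pow_four :
    Tendsto (fun M : ℕ => IUnormCF σ2 β k M / (M : ℝ) ^ 4) atTop (𝓝 0) := by
  refine tendsto_of_eq_comp_natCast_inv
    (f := fun x => (∑ i ∈ Finset.univ.erase (k + 1),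
        (aCF K σ2 β k i * x + bCF K σ2 β k i * x ^ 2 + cCF K σ2 β k i * x ^ 3))
      + (σ2 (k - 1)) ^ 2 * (σ2 k) ^ 2 * x ^ 2
      + (2 * (σ2 k) ^ 3 * σ2 (k + 1) + 2 * (σ2 k) ^ 3 * σ2 (k - 1)
        + (2 * (σ2 k) ^ 2 + (β k) ^ 2 - 2 * β k * σ2 k) * ∑ k' : ZMod K, 2 * σ2 k' * σ2 (k' + 1))
        * x ^ 3)
    (by fun_prop) (by simp)
    fun M hM => by
      have : (M : ℝ) ≠ 0 := Nat.cast_ne_zero.2 hM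
      simp only [IUnormCF, add_div, Finset.sum_div]
      congr 2
      · exact Finset.sum_congr rfl fun i _ => by field_simp
      all_goals field_simp

theorem tendsto_amplifiedNoise_div_scaled (Eu : ℝ) :
    Tendsto (fun M : ℕ => ((M : ℝ) ^ 3 * (σ2 k) ^ 2 * σ2 (k + 1)
        + (M : ℝ) ^ 2 * β k * ∑ k' : ZMod K, σ2 k' * σ2 (k' + 1)) / (Eu / M * (M : ℝ) ^ 4))
      atTop (𝓝 ((σ2 k) ^ 2 * σ2 (k + 1) / Eu)) := by
  refine tendsto_of_eq_comp_natCast_inv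
    (f := fun x => ((σ2 k) ^ 2 * σ2 (k + 1) + β k * (∑ k' : ZMod K, σ2 k' * σ2 (k' + 1)) * x) / Eu)
    (by fun_prop) (by simp) fun M hM => by
      have : (M : ℝ) ≠ 0 := Nat.cast_ne_zero.2 hM
      field_simp

theorem tendsto_inv_alphaCF_scaled (Eu Er : ℝ) :
    Tendsto (fun M : ℕ => 1 / (alphaCF K σ2 β (Eu / M) (Er / M) M * (Eu / M) * (M : ℝ) ^ 4))
      atTop (𝓝 ((∑ k' : ZMod K, (Eu * σ2 (k' - 1) * (σ2 k') ^ 2 + σ2 k' * σ2 (k' + 1)))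
        / (Er * Eu))) := by
  refine tendsto_of_eq_comp_natCast_inv
    (f := fun x => ((∑ k' : ZMod K, (Eu * σ2 (k' - 1) * (σ2 k') ^ 2 + σ2 k' * σ2 (k' + 1)))
      + Eu * (∑ k' : ZMod K, β k') * (∑ k' : ZMod K, σ2 k' * σ2 (k' + 1)) * x
      + Eu * (∑ k' : ZMod K, (σ2 k') ^ 2 * σ2 (k' + 1)) * x ^ 2) / (Er * Eu))
    (by fun_prop) (by simp) fun M hM => by
      have : (M : ℝ) ≠ 0 := Nat.cast_ne_zero.2 hM
      rw [alphaCF, one_div, mul_assoc, mul_inv, inv_div, Finset.sum_add_distrib]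
      simp only [mul_assoc, ← Finset.mul_sum]
      field_simp
      ring

variable {σ2 β}

theorem alphaCF_pos (hσ : ∀ j, 0 < σ2 j) (hβ : ∀ j, 0 < β j) {Pu Pr : ℝ} (hPu : 0 < Pu)
    (hPr : 0 < Pr) {M : ℕ} (hM : 0 < M) : 0 < alphaCF K σ2 β Pu Pr M := by
  have hsum : ∀ f : ZMod K → ℝ, (∀ j, 0 < f j) → 0 < ∑ j, f j :=
    fun f hf => Finset.sum_pos (fun j _ => hf j) Finset.univ_nonempty
  have h1 := hsum _ fun j => mul_pos (hσ (j - 1)) (pow_pos (hσ j) 2)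
  have h2 := hsum _ fun j => mul_pos (hσ j) (hσ (j + 1))
  have h3 := hsum _ fun j => mul_pos (pow_pos (hσ j) 2) (hσ (j + 1))
  have hb := hsum _ hβ
  rw [alphaCF]
  positivity

theorem sum_scaledPowerWeights_pos (hσ : ∀ j, 0 < σ2 j) {Eu : ℝ} (hEu : 0 ≤ Eu) :
    0 < ∑ k' : ZMod K, (Eu * σ2 (k' - 1) * (σ2 k') ^ 2 + σ2 k' * σ2 (k' + 1)) := by
  refine Finset.sum_pos (fun j _ => ?_) Finset.univ_nonempty
  have := hσ (j - 1)
  have := hσ j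
  have := hσ (j + 1)
  positivity

theorem tendsto_sinrCF_scaled (hσ : ∀ j, 0 < σ2 j) (hβ : ∀ j, 0 < β j) {Eu Er : ℝ}
    (hEu : 0 < Eu) (hEr : 0 < Er) :
    Tendsto (fun M : ℕ => sinrCF K σ2 β (Eu / M) (Er / M) k M) atTop
      (𝓝 (Er * Eu * (σ2 k) ^ 2 * (σ2 (k + 1)) ^ 2 / (Er * (σ2 k) ^ 2 * σ2 (k + 1)
        + ∑ k' : ZMod K, (Eu * σ2 (k' - 1) * (σ2 k') ^ 2 + σ2 k' * σ2 (k' + 1))))) := by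
  have hC := sum_scaledPowerWeights_pos hσ hEu.le
  have := hσ k
  have := hσ (k + 1)
  have hden := (((tendsto_Vcf_div_pow_four σ2 β k).add (tendsto_IUnormCF_div_pow_four σ2 β k)).add
    (tendsto_amplifiedNoise_div_scaled σ2 β k Eu)).add (tendsto_inv_alphaCF_scaled σ2 β Eu Er)
  have hlim := (tendsto_const_nhds (x := (σ2 k) ^ 2 * (σ2 (k + 1)) ^ 2)).div hden (by positivity)
  convert hlim.congr' ?_ using 2
  · field_simp
    ring
  · filter_upwards [eventually_gt_atTop 0] with M hM
    have hM' : (0 : ℝ) < M := Nat.cast_pos.2 hM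
    exact (sinrCF_eq_div σ2 β k (alphaCF_pos hσ hβ (by positivity) (by positivity) hM).ne'
      (by positivity) hM'.ne').symm

end ClosedForm

theorem sinr_limit_both_powers_scaling_general
    (K : ℕ) [NeZero K]
    (β : ZMod K → ℝ) (hβ : ∀ k, 0 < β k)
    (τ T Pp : ℝ) (hτ : (K : ℝ) ≤ τ) (hPp : 0 < Pp)
    (σ2 : ZMod K → ℝ) (hσ2 : ∀ k, σ2 k = τ * Pp * (β k) ^ 2 / (τ * Pp * β k + 1))
    (Eu Er : ℝ) (hEu : 0 < Eu) (hEr : 0 < Er)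
    (ξ : ℝ) (hξ : ξ = Er / ∑ k' : ZMod K,
      (Eu * σ2 (k' - 1) * (σ2 k') ^ 2 + σ2 k' * σ2 (k' + 1)))
    (k : ZMod K) :
    Tendsto (fun M : ℕ => sinrCF K σ2 β (Eu / M) (Er / M) k M) atTop
      (nhds (ξ * Eu * (σ2 k) ^ 2 * (σ2 (k + 1)) ^ 2
        / (ξ * (σ2 k) ^ 2 * σ2 (k + 1) + 1))) ∧
    Tendsto (fun M : ℕ => (T - τ) / T * (((K : ℝ) - 1) / K)
        * Real.logb 2 (1 + sinrCF K σ2 β (Eu / M) (Er / M) k M)) atTop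
      (nhds ((T - τ) / T * (((K : ℝ) - 1) / K) * Real.logb 2 (1 + ξ * Eu * (σ2 k) ^ 2
        * (σ2 (k + 1)) ^ 2 / (ξ * (σ2 k) ^ 2 * σ2 (k + 1) + 1)))) := by
  have hτ0 : 0 < τ := (Nat.cast_pos.2 (NeZero.pos K)).trans_le hτ
  have hσ : ∀ j, 0 < σ2 j := fun j => by
    have := hβ j
    rw [hσ2]
    positivity
  have hC := sum_scaledPowerWeights_pos hσ hEu.le
  have hξ0 : 0 < ξ := hξ ▸ div_pos hEr hC
  have hsinr := tendsto_sinrCF_scaled k hσ hβ hEu hEr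
  set C := ∑ k' : ZMod K, (Eu * σ2 (k' - 1) * (σ2 k') ^ 2 + σ2 k' * σ2 (k' + 1))
  rw [show Er * Eu * (σ2 k) ^ 2 * (σ2 (k + 1)) ^ 2 / (Er * (σ2 k) ^ 2 * σ2 (k + 1) + C)
      = ξ * Eu * (σ2 k) ^ 2 * (σ2 (k + 1)) ^ 2 / (ξ * (σ2 k) ^ 2 * σ2 (k + 1) + 1) by
    rw [hξ]; field_simp] at hsinr
  have := hσ k
  have := hσ (k + 1)
  exact ⟨hsinr, ((tendsto_const_nhds.add hsinr).logb (by positivity)).const_mul _⟩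

/-- with both powers scaled as `P_u = E_u/M`, `P_r = E_r/M`,
`SINR_k(M) → ξ E_u σ_k⁴ σ_{k+1}⁴ / (ξ σ_k⁴ σ_{k+1}² + 1)` where
`ξ = E_r / Σ_{k'} (E_u σ_{k'-1}² σ_{k'}⁴ + σ_{k'}² σ_{k'+1}²)`, and the spectral
efficiency converges accordingly (eq. (35)). -/
theorem sinr_limit_both_powers_scaling
    (K : ℕ) [NeZero K] (hK : 2 ≤ K)
    (β : ZMod K → ℝ) (hβ : ∀ k, 0 < β k)
    (τ T Pp : ℝ) (hτ : (K : ℝ) ≤ τ) (hT : τ < T) (hPp : 0 < Pp)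
    (σ2 : ZMod K → ℝ) (hσ2 : ∀ k, σ2 k = τ * Pp * (β k) ^ 2 / (τ * Pp * β k + 1))
    (Eu Er : ℝ) (hEu : 0 < Eu) (hEr : 0 < Er)
    (ξ : ℝ) (hξ : ξ = Er / ∑ k' : ZMod K,
      (Eu * σ2 (k' - 1) * (σ2 k') ^ 2 + σ2 k' * σ2 (k' + 1)))
    (k : ZMod K) :
    Tendsto (fun M : ℕ => sinrCF K σ2 β (Eu / M) (Er / M) k M) atTop
      (nhds (ξ * Eu * (σ2 k) ^ 2 * (σ2 (k + 1)) ^ 2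
        / (ξ * (σ2 k) ^ 2 * σ2 (k + 1) + 1))) ∧
    Tendsto (fun M : ℕ => (T - τ) / T * (((K : ℝ) - 1) / K)
        * Real.logb 2 (1 + sinrCF K σ2 β (Eu / M) (Er / M) k M)) atTop
      (nhds ((T - τ) / T * (((K : ℝ) - 1) / K) * Real.logb 2 (1 + ξ * Eu * (σ2 k) ^ 2
        * (σ2 (k + 1)) ^ 2 / (ξ * (σ2 k) ^ 2 * σ2 (k + 1) + 1)))) :=
  sinr_limit_both_powers_scaling_general K β hβ τ T Pp hτ hPp σ2 hσ2 Eu Er hEu hEr ξ hξ k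
end
end
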